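/- arXiv:1701.07482 — 2 statements merged into one kernel-verified Lean document; each statement's English description precedes it below -/
import Mathlib

section
/- Consider the switched quantized control system with parameter α satisfying 1 < α < 3/2 and disturbance rounding error Δ_d with |Δ_d| < 1/2, and suppose condition (9) holds at some time k. Then there exists k̄ ≥ k such that for all j ≥ k̄: if Δ_d > 0 then e(j) ∈ [−1/2 + Δ_d, 1/2 + Δ_d); if Δ_d < 0 then e(j) ∈ (−1/2 + Δ_d, 1/2 + Δ_d]; and if Δ_d = 0 then e(j) = e(k̄) with |e(j)| < 1/2. Consequently the quantized error ρ(e(j)) takes values only in {0, sign(Δ_d)}, i.e., its excursion in amplitude is at most 1. -/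
/-!
For `Δd > 0`, one step after (9) holds the state is caught in a two-state limit cycle: while
`e < 1/2` the control is `0` and `e` drifts up by `Δd`; the first time `e ≥ 1/2` the switch sets
`ū` to `ū - α ∈ (-3/2, -1/2]`, so the next step takes `1` off `e` and resets the control to `0`.
The case `Δd < 0` is the mirror image under `(e, ū, Δd) ↦ (-e, -ū, -Δd)`, and for `Δd = 0` both
quantized signals vanish, so `e` is frozen.
-/

/-- Sign function: 1 for positive, 0 for zero, -1 for negative. -/
noncomputable def rsign (z : ℝ) : ℤ :=
  if 0 < z then 1 else if z = 0 then 0 else -1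

/-- Rounding operator: rounds to the nearest integer, ties away from zero. -/
noncomputable def rho (z : ℝ) : ℤ :=
  if Int.fract |z| < 1/2 then rsign z * ⌊|z|⌋ else rsign z * (⌊|z|⌋ + 1)

/-- The switched quantized control system with parameter `α` and disturbance
rounding error `Δd`, with state trajectory `(e, u)`. -/
def Traj (α Δd : ℝ) (e u : ℕ → ℝ) : Prop :=
  ∀ k : ℕ,
    e (k+1) = e k + (rho (u k) : ℝ) + Δd ∧
    u (k+1) = if rho (e (k+1)) = 0
      then ((rho (u k) : ℝ) + (rho (e k) : ℝ))
      else (u k + (rho (e k) : ℝ) - α * (rho (e (k+1)) : ℝ))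

/-- Condition (9) at time `k`. -/
def Cond9 (α Δd : ℝ) (e u : ℕ → ℝ) (k : ℕ) : Prop :=
  (-(1/2) < e k ∧ e k < 1/2) ∧
  (1 ≤ α - u k * (rsign Δd : ℝ) ∧ α - u k * (rsign Δd : ℝ) < 3/2) ∧
  (-(1/2) < u k ∧ u k < 1/2)

lemma rsign_neg (z : ℝ) : rsign (-z) = -rsign z := by
  unfold rsign
  rcases lt_trichotomy z 0 with h | rfl | h
  · simp [h, h.not_gt, h.ne]
  · simp
  · simp [h, h.not_gt, h.ne']

lemma rho_neg (z : ℝ) : rho (-z) = -rho z := by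
  unfold rho
  rw [abs_neg, rsign_neg]
  split_ifs <;> ring

lemma rho_eq_round {z : ℝ} (hz : 0 ≤ z) : rho z = round z := by
  rcases hz.eq_or_lt with rfl | hz
  · simp [rho, rsign]
  rw [eq_comm, round_eq_iff, rho, abs_of_pos hz, rsign, if_pos hz, one_mul]
  have := Int.floor_add_fract z
  have := Int.fract_lt_one z
  have := Int.fract_nonneg z
  split_ifs <;> push_cast <;> constructor <;> linarith

lemma rho_eq_zero_iff {z : ℝ} : rho z = 0 ↔ |z| < 1 / 2 := by
  rcases le_total 0 z with hz | hz
  · rw [rho_eq_round hz, round_eq_zero_iff, abs_of_nonneg hz, Set.mem_Ico]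
    exact ⟨And.right, fun h => ⟨by linarith, h⟩⟩
  · rw [← neg_neg z, rho_neg, neg_eq_zero, abs_neg, rho_eq_round (neg_nonneg.2 hz),
      round_eq_zero_iff, abs_of_nonneg (neg_nonneg.2 hz), Set.mem_Ico]
    exact ⟨And.right, fun h => ⟨by linarith, h⟩⟩

lemma rho_eq_one {z : ℝ} (h₁ : 1 / 2 ≤ z) (h₂ : z < 3 / 2) : rho z = 1 := by
  rw [rho_eq_round (by linarith), round_eq_iff]
  constructor <;> norm_num <;> linarith

lemma rho_eq_neg_one {z : ℝ} (h₁ : -(3 / 2) < z) (h₂ : z ≤ -(1 / 2)) : rho z = -1 := by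
  rw [← neg_neg z, rho_neg, rho_eq_one] <;> linarith

lemma rsign_of_pos {z : ℝ} (hz : 0 < z) : rsign z = 1 := if_pos hz

def InLimitCycle (Δd x v : ℝ) : Prop :=
  (-(1/2) + Δd ≤ x ∧ x < 1/2 ∧ v = 0) ∨
    (1/2 ≤ x ∧ x < 1/2 + Δd ∧ -(3/2) < v ∧ v ≤ -(1/2))

namespace InLimitCycle

variable {Δd x v : ℝ}

lemma mem_Ico (hΔ : 0 ≤ Δd) (hΔ' : Δd ≤ 1) (h : InLimitCycle Δd x v) :
    x ∈ Set.Ico (-(1/2) + Δd) (1/2 + Δd) := by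
  rcases h with ⟨h₁, h₂, -⟩ | ⟨h₁, h₂, -⟩ <;> constructor <;> linarith

lemma rho_eq_zero_or_eq_one (hΔ : 0 < Δd) (hΔ' : Δd ≤ 1) (h : InLimitCycle Δd x v) :
    rho x = 0 ∨ rho x = 1 := by
  rcases h with ⟨h₁, h₂, -⟩ | ⟨h₁, h₂, -⟩
  · exact Or.inl (rho_eq_zero_iff.2 (abs_lt.2 ⟨by linarith, h₂⟩))
  · exact Or.inr (rho_eq_one h₁ (by linarith))

end InLimitCycle

lemma Cond9.neg {α Δd : ℝ} {e u : ℕ → ℝ} {k : ℕ} (h : Cond9 α Δd e u k) :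
    Cond9 α (-Δd) (-e) (-u) k := by
  obtain ⟨⟨he₁, he₂⟩, ⟨hc₁, hc₂⟩, ⟨hu₁, hu₂⟩⟩ := h
  simp only [Cond9, Pi.neg_apply, rsign_neg, Int.cast_neg, neg_mul_neg]
  exact ⟨⟨by linarith, by linarith⟩, ⟨hc₁, hc₂⟩, ⟨by linarith, by linarith⟩⟩

namespace Traj

variable {α Δd : ℝ} {e u : ℕ → ℝ}

lemma neg (h : Traj α Δd e u) : Traj α (-Δd) (-e) (-u) := by
  intro k
  obtain ⟨he, hu⟩ := h k
  simp only [Pi.neg_apply, rho_neg, neg_eq_zero, Int.cast_neg]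
  refine ⟨by rw [he]; ring, ?_⟩
  split_ifs at hu ⊢ <;> rw [hu] <;> ring

lemma const_of_quiet (h : Traj α 0 e u) {k : ℕ} (he : |e k| < 1/2) (hu : |u k| < 1/2) :
    ∀ j, k ≤ j → e j = e k ∧ |u j| < 1/2 := by
  refine Nat.le_induction ⟨rfl, hu⟩ fun j _ ⟨hej, huj⟩ => ?_
  obtain ⟨he', hu'⟩ := h j
  have hej' : e (j + 1) = e k := by rw [he', rho_eq_zero_iff.2 huj, hej]; simp
  have hρe : rho (e j) = 0 := rho_eq_zero_iff.2 (hej ▸ he)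
  rw [if_pos (rho_eq_zero_iff.2 (hej' ▸ he)), rho_eq_zero_iff.2 huj, hρe] at hu'
  exact ⟨hej', by norm_num [hu']⟩

lemma inLimitCycle_succ_of_quiet (h : Traj α Δd e u) (hΔ : 0 ≤ Δd) (hΔ' : Δd ≤ 1) {j : ℕ}
    (he : |e j| < 1/2) (hu : |u j| < 1/2) (hα : 1/2 ≤ α - u j) (hα' : α - u j < 3/2) :
    InLimitCycle Δd (e (j + 1)) (u (j + 1)) := by
  obtain ⟨he', hu'⟩ := h j
  rw [rho_eq_zero_iff.2 hu, Int.cast_zero, add_zero] at he'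
  rw [rho_eq_zero_iff.2 hu, rho_eq_zero_iff.2 he, Int.cast_zero, add_zero] at hu'
  obtain ⟨he₁, he₂⟩ := abs_lt.1 he
  by_cases hlow : e (j + 1) < 1/2
  · rw [if_pos (rho_eq_zero_iff.2 (abs_lt.2 ⟨by linarith, hlow⟩))] at hu'
    exact Or.inl ⟨by linarith, hlow, hu'⟩
  · have hρ : rho (e (j + 1)) = 1 := rho_eq_one (by linarith) (by linarith)
    rw [if_neg (by simp [hρ]), hρ, Int.cast_one, mul_one] at hu'
    exact Or.inr ⟨by linarith, by linarith, by linarith, by linarith⟩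

lemma inLimitCycle_succ (h : Traj α Δd e u) (hΔ : 0 < Δd) (hΔ' : Δd < 1/2)
    (hα : 1/2 ≤ α) (hα' : α < 3/2) {j : ℕ} (hj : InLimitCycle Δd (e j) (u j)) :
    InLimitCycle Δd (e (j + 1)) (u (j + 1)) := by
  rcases hj with ⟨he₁, he₂, hu⟩ | ⟨he₁, he₂, hu₁, hu₂⟩
  · exact h.inLimitCycle_succ_of_quiet hΔ.le (by linarith) (abs_lt.2 ⟨by linarith, he₂⟩)
      (by norm_num [hu]) (by linarith) (by linarith)
  · obtain ⟨he', hu'⟩ := h j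
    have hρu : rho (u j) = -1 := rho_eq_neg_one hu₁ hu₂
    rw [hρu] at he'
    push_cast at he'
    rw [if_pos (rho_eq_zero_iff.2 (abs_lt.2 ⟨by linarith, by linarith⟩)), hρu,
      rho_eq_one he₁ (by linarith)] at hu'
    exact Or.inl ⟨by linarith, by linarith, by norm_num [hu']⟩

lemma inLimitCycle_of_cond9 (h : Traj α Δd e u) (hΔ : 0 < Δd) (hΔ' : Δd < 1/2)
    (hα : 1/2 ≤ α) (hα' : α < 3/2) {k : ℕ} (h9 : Cond9 α Δd e u k) :
    ∀ j, k < j → InLimitCycle Δd (e j) (u j) := by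
  obtain ⟨⟨he₁, he₂⟩, ⟨hc₁, hc₂⟩, ⟨hu₁, hu₂⟩⟩ := h9
  rw [rsign_of_pos hΔ, Int.cast_one, mul_one] at hc₁ hc₂
  refine Nat.le_induction ?_ fun j _ hj => h.inLimitCycle_succ hΔ hΔ' hα hα' hj
  exact h.inLimitCycle_succ_of_quiet hΔ.le (by linarith) (abs_lt.2 ⟨he₁, he₂⟩)
    (abs_lt.2 ⟨hu₁, hu₂⟩) (by linarith) hc₂

end Traj

theorem stmt_6 (α Δd : ℝ) (hα : 1 < α ∧ α < 3/2) (hΔ : |Δd| < 1/2)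
    (e u : ℕ → ℝ) (htraj : Traj α Δd e u) (k : ℕ) (h9 : Cond9 α Δd e u k) :
    ∃ kb : ℕ, k ≤ kb ∧ ∀ j : ℕ, kb ≤ j →
      (0 < Δd → e j ∈ Set.Ico (-(1/2) + Δd) (1/2 + Δd)) ∧
      (Δd < 0 → e j ∈ Set.Ioc (-(1/2) + Δd) (1/2 + Δd)) ∧
      (Δd = 0 → e j = e kb ∧ |e j| < 1/2) ∧
      (rho (e j) = 0 ∨ rho (e j) = rsign Δd) := by
  obtain ⟨hα₁, hα₂⟩ := hα
  obtain ⟨hΔ₁, hΔ₂⟩ := abs_lt.1 hΔ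
  rcases lt_trichotomy Δd 0 with hneg | rfl | hpos
  · have hcycle := htraj.neg.inLimitCycle_of_cond9 (neg_pos.2 hneg) (by linarith)
      (by linarith) hα₂ h9.neg
    refine ⟨k + 1, k.le_succ, fun j hj => ?_⟩
    have hmem := (hcycle j hj).mem_Ico (by linarith) (by linarith)
    have hρ := (hcycle j hj).rho_eq_zero_or_eq_one (by linarith) (by linarith)
    simp only [Pi.neg_apply, Set.mem_Ico, rho_neg, neg_eq_iff_eq_neg] at hmem hρ
    refine ⟨fun h => absurd h hneg.not_gt, fun _ => ⟨by linarith, by linarith⟩,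
      fun h => absurd h hneg.ne, ?_⟩
    rwa [← neg_neg Δd, rsign_neg, rsign_of_pos (neg_pos.2 hneg)]
  · obtain ⟨⟨he₁, he₂⟩, -, ⟨hu₁, hu₂⟩⟩ := h9
    have he := abs_lt.2 ⟨he₁, he₂⟩
    refine ⟨k, le_rfl, fun j hj => ?_⟩
    obtain ⟨hej, -⟩ := htraj.const_of_quiet he (abs_lt.2 ⟨hu₁, hu₂⟩) j hj
    exact ⟨fun h => absurd h (lt_irrefl 0), fun h => absurd h (lt_irrefl 0),
      fun _ => ⟨hej, hej ▸ he⟩, Or.inl (rho_eq_zero_iff.2 (hej ▸ he))⟩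
  · have hcycle := htraj.inLimitCycle_of_cond9 hpos hΔ₂ (by linarith) hα₂ h9
    refine ⟨k + 1, k.le_succ, fun j hj => ⟨fun _ => (hcycle j hj).mem_Ico hpos.le (by linarith),
      fun h => absurd h hpos.not_gt, fun h => absurd h hpos.ne', ?_⟩⟩
    rw [rsign_of_pos hpos]
    exact (hcycle j hj).rho_eq_zero_or_eq_one hpos (by linarith)
end

section
/- (One-step lemma, no switch.) Consider the switched quantized control system with parameter α satisfying 1 < α < 3/2 and disturbance rounding error Δ_d with 0 < Δ_d ≤ 1/2. Suppose at time k condition (9) holds and additionally |e(k) + Δ_d| < 1/2. Then e(k+1) = e(k) + Δ_d, ū(k+1) = 0, (ρ(e(k+1)), ρ(ū(k+1))) = (0, 0), and condition (9) holds at time k+1. -/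
/-! While the state stays in the dead zone `|e|, |ū| < 1/2` of the quantizer, both quantized
signals vanish, so the error only accumulates the disturbance, `e(k+1) = e(k) + Δ_d`, and the
no-switch branch resets the control to `ρ(ū(k)) + ρ(e(k)) = 0`. Condition (9) at `k+1` then
only asks `1 ≤ α < 3/2` and `|e(k) + Δ_d| < 1/2`. -/

theorem rho_eq_zero_of_abs_lt {z : ℝ} (h : |z| < 1/2) : rho z = 0 := by
  have hfloor : ⌊|z|⌋ = 0 := Int.floor_eq_zero_iff.mpr ⟨abs_nonneg z, by linarith⟩
  have hfract : Int.fract |z| < 1/2 := by rwa [Int.fract, hfloor, Int.cast_zero, sub_zero]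
  rw [rho, if_pos hfract, hfloor, mul_zero]

theorem rho_zero : rho 0 = 0 :=
  rho_eq_zero_of_abs_lt (by norm_num)

section Cond9

variable {α Δd : ℝ} {e u : ℕ → ℝ} {k : ℕ}

theorem Cond9.rho_e_eq_zero (h : Cond9 α Δd e u k) : rho (e k) = 0 :=
  rho_eq_zero_of_abs_lt (abs_lt.mpr h.1)

theorem Cond9.rho_u_eq_zero (h : Cond9 α Δd e u k) : rho (u k) = 0 :=
  rho_eq_zero_of_abs_lt (abs_lt.mpr h.2.2)

theorem cond9_of_u_eq_zero (hα : 1 < α ∧ α < 3/2) (he : |e k| < 1/2) (hu : u k = 0) :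
    Cond9 α Δd e u k := by
  simp only [Cond9, hu, zero_mul, sub_zero]
  exact ⟨abs_lt.mp he, ⟨hα.1.le, hα.2⟩, by norm_num, by norm_num⟩

end Cond9

section Traj

variable {α Δd : ℝ} {e u : ℕ → ℝ}

theorem Traj.e_succ_of_rho_u_eq_zero (htraj : Traj α Δd e u) {k : ℕ} (hu : rho (u k) = 0) :
    e (k+1) = e k + Δd := by
  rw [(htraj k).1, hu, Int.cast_zero, add_zero]

theorem Traj.u_succ_eq_zero (htraj : Traj α Δd e u) {k : ℕ} (hu : rho (u k) = 0)
    (he : rho (e k) = 0) (he' : rho (e (k+1)) = 0) : u (k+1) = 0 := by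
  rw [(htraj k).2, if_pos he', hu, he, Int.cast_zero, add_zero]

end Traj

theorem stmt_11_general (α Δd : ℝ) (hα : 1 < α ∧ α < 3/2)
    (e u : ℕ → ℝ) (htraj : Traj α Δd e u) (k : ℕ) (h9 : Cond9 α Δd e u k)
    (hstep : |e k + Δd| < 1/2) :
    e (k+1) = e k + Δd ∧ u (k+1) = 0 ∧
    (rho (e (k+1)), rho (u (k+1))) = ((0 : ℤ), (0 : ℤ)) ∧
    Cond9 α Δd e u (k+1) := by
  have he_succ : e (k+1) = e k + Δd := htraj.e_succ_of_rho_u_eq_zero h9.rho_u_eq_zero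
  have he_succ_small : |e (k+1)| < 1/2 := he_succ ▸ hstep
  have hrho_e_succ : rho (e (k+1)) = 0 := rho_eq_zero_of_abs_lt he_succ_small
  have hu_succ : u (k+1) = 0 :=
    htraj.u_succ_eq_zero h9.rho_u_eq_zero h9.rho_e_eq_zero hrho_e_succ
  refine ⟨he_succ, hu_succ, ?_, cond9_of_u_eq_zero hα he_succ_small hu_succ⟩
  rw [hrho_e_succ, hu_succ, rho_zero]

theorem stmt_11 (α Δd : ℝ) (hα : 1 < α ∧ α < 3/2) (hΔ : 0 < Δd ∧ Δd ≤ 1/2)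
    (e u : ℕ → ℝ) (htraj : Traj α Δd e u) (k : ℕ) (h9 : Cond9 α Δd e u k)
    (hstep : |e k + Δd| < 1/2) :
    e (k+1) = e k + Δd ∧ u (k+1) = 0 ∧
    (rho (e (k+1)), rho (u (k+1))) = ((0 : ℤ), (0 : ℤ)) ∧
    Cond9 α Δd e u (k+1) :=
  stmt_11_general α Δd hα e u htraj k h9 hstep
end
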